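/- Let α > 0, β > 0, let p : ℝ² → ℝ be continuously differentiable, let ω : ℝ → ℝ² be a disturbance with ‖ω(t)‖ ≤ ω̄ for all t, and let x : ℝ → ℝ² be a differentiable trajectory satisfying the disturbed control law x'(t) = g(x(t)) + ω(t) with 0 < p(x(t)) < 1 along the trajectory, where g(x) = ∇ log(w(p(x))). Then the Lyapunov candidate V(x) = -log(w(p(x))) satisfies, along the trajectory, d/dt V(x(t)) = -‖g(x(t))‖² - ⟨g(x(t)), ω(t)⟩ ≤ -(1/2)‖g(x(t))‖² + (1/2)ω̄² for all t. -/

import Mathlib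

open scoped RealInnerProductSpace

/-- The planar environment ℝ². -/
abbrev Env : Type := EuclideanSpace ℝ (Fin 2)

/-- Prelec's probability weighting function. -/
noncomputable def prelecW (α β p : ℝ) : ℝ := Real.exp (-β * (-Real.log p) ^ α)

/-- The Lyapunov candidate V(x) = -log(w(p(x))). -/
noncomputable def lyapV (α β : ℝ) (p : Env → ℝ) (x : Env) : ℝ :=
  -Real.log (prelecW α β (p x))

/-- The source-seeking velocity field g(x) = ∇ log(w(p(x))). -/
noncomputable def seekField (α β : ℝ) (p : Env → ℝ) (x : Env) : Env :=
  gradient (fun y => Real.log (prelecW α β (p y))) x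

/-!
The Lyapunov candidate is `V = -F` with `F = log ∘ w ∘ p`, and the field is `g = ∇F`. Along a
trajectory with velocity `g + ω` the chain rule gives `dV/dt = -⟪g, g + ω⟫ = -‖g‖² - ⟪g, ω⟫`,
and Cauchy–Schwarz followed by `ab ≤ (a² + b²)/2` bounds `-⟪g, ω⟫` by `(‖g‖² + ω̄²)/2`.
-/

theorem HasGradientAt.comp_hasDerivAt {E : Type*} [NormedAddCommGroup E] [InnerProductSpace ℝ E]
    [CompleteSpace E] {F : E → ℝ} {g : E} {x : ℝ → E} {v : E} {t : ℝ}
    (hF : HasGradientAt F g (x t)) (hx : HasDerivAt x v t) :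
    HasDerivAt (fun s => F (x s)) ⟪g, v⟫ t := by
  have h := hF.hasFDerivAt.comp_hasDerivAt t hx
  rwa [InnerProductSpace.toDual_apply_apply] at h

theorem neg_sq_norm_sub_inner_le {E : Type*} [NormedAddCommGroup E] [InnerProductSpace ℝ E]
    (g : E) {w : E} {c : ℝ} (hw : ‖w‖ ≤ c) :
    -‖g‖ ^ 2 - ⟪g, w⟫ ≤ -(1 / 2) * ‖g‖ ^ 2 + (1 / 2) * c ^ 2 := by
  have hcs : -⟪g, w⟫ ≤ ‖g‖ * ‖w‖ := by
    simpa using real_inner_le_norm g (-w)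
  have hw_sq : ‖w‖ ^ 2 ≤ c ^ 2 := pow_le_pow_left₀ (norm_nonneg w) hw 2
  nlinarith [sq_nonneg (‖g‖ - ‖w‖)]

theorem log_prelecW (α β q : ℝ) : Real.log (prelecW α β q) = -β * (-Real.log q) ^ α :=
  Real.log_exp _

theorem DifferentiableAt.log_prelecW_comp {E : Type*} [NormedAddCommGroup E] [NormedSpace ℝ E]
    (α β : ℝ) {p : E → ℝ} {y : E} (hp : DifferentiableAt ℝ p y) (h0 : 0 < p y) (h1 : p y < 1) :
    DifferentiableAt ℝ (fun z => Real.log (prelecW α β (p z))) y := by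
  simp only [log_prelecW]
  have hlog_ne : -Real.log (p y) ≠ 0 := (neg_pos.mpr (Real.log_neg h0 h1)).ne'
  exact ((hp.log h0.ne').neg.rpow_const (Or.inl hlog_ne)).const_mul _

theorem hasDerivAt_lyapV_comp (α β : ℝ) {p : Env → ℝ} {x : ℝ → Env} {v : Env} {t : ℝ}
    (hp : DifferentiableAt ℝ p (x t)) (h0 : 0 < p (x t)) (h1 : p (x t) < 1)
    (hx : HasDerivAt x v t) :
    HasDerivAt (fun s => lyapV α β p (x s)) (-⟪seekField α β p (x t), v⟫) t :=
  ((hp.log_prelecW_comp α β h0 h1).hasGradientAt.comp_hasDerivAt hx).neg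

theorem lyapV_disturbed_derivative_bound_general (α β : ℝ)
    (p : Env → ℝ) (hp : ContDiff ℝ 1 p)
    (ω : ℝ → Env) (ωbar : ℝ) (hω : ∀ t : ℝ, ‖ω t‖ ≤ ωbar)
    (x : ℝ → Env)
    (hx : ∀ t : ℝ, HasDerivAt x (seekField α β p (x t) + ω t) t)
    (hrange : ∀ t : ℝ, 0 < p (x t) ∧ p (x t) < 1) :
    ∀ t : ℝ,
      HasDerivAt (fun s => lyapV α β p (x s))
        (-‖seekField α β p (x t)‖ ^ 2 - ⟪seekField α β p (x t), ω t⟫) t ∧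
      -‖seekField α β p (x t)‖ ^ 2 - ⟪seekField α β p (x t), ω t⟫ ≤
        -(1 / 2) * ‖seekField α β p (x t)‖ ^ 2 + (1 / 2) * ωbar ^ 2 := by
  intro t
  obtain ⟨h0, h1⟩ := hrange t
  have hV := hasDerivAt_lyapV_comp α β (hp.differentiable one_ne_zero _) h0 h1 (hx t)
  refine ⟨?_, neg_sq_norm_sub_inner_le _ (hω t)⟩
  rwa [inner_add_right, real_inner_self_eq_norm_sq, neg_add] at hV

/-- Along any trajectory of the disturbed control law x' = g(x) + ω with ‖ω(t)‖ ≤ ω̄ and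
0 < p < 1 on the trajectory, the Lyapunov candidate V = -log(w(p(·))) satisfies
d/dt V(x(t)) = -‖g(x(t))‖² - ⟨g(x(t)), ω(t)⟩ ≤ -(1/2)‖g(x(t))‖² + (1/2)ω̄². -/
theorem lyapV_disturbed_derivative_bound (α β : ℝ) (hα : 0 < α) (hβ : 0 < β)
    (p : Env → ℝ) (hp : ContDiff ℝ 1 p)
    (ω : ℝ → Env) (ωbar : ℝ) (hω : ∀ t : ℝ, ‖ω t‖ ≤ ωbar)
    (x : ℝ → Env)
    (hx : ∀ t : ℝ, HasDerivAt x (seekField α β p (x t) + ω t) t)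
    (hrange : ∀ t : ℝ, 0 < p (x t) ∧ p (x t) < 1) :
    ∀ t : ℝ,
      HasDerivAt (fun s => lyapV α β p (x s))
        (-‖seekField α β p (x t)‖ ^ 2 - ⟪seekField α β p (x t), ω t⟫) t ∧
      -‖seekField α β p (x t)‖ ^ 2 - ⟪seekField α β p (x t), ω t⟫ ≤
        -(1 / 2) * ‖seekField α β p (x t)‖ ^ 2 + (1 / 2) * ωbar ^ 2 :=
  lyapV_disturbed_derivative_bound_general α β p hp ω ωbar hω x hx hrange
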